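/- arXiv:math/0702379 — 7 statements merged into one kernel-verified Lean document; each statement's English description precedes it below -/
import Mathlib

section
/- Commensurability is an equivalence relation on the set of n-dimensional ℚ-lattices: the relation defined by (Λ₁, φ₁) ∼ (Λ₂, φ₂) if and only if ℚΛ₁ = ℚΛ₂ and φ₁ = φ₂ modulo Λ₁ + Λ₂ is reflexive, symmetric, and transitive. -/
/-- An `n`-dimensional `ℚ`-lattice: a pair `(Λ, φ)` where `Λ` is a lattice in `ℝⁿ`
(a discrete `ℤ`-submodule spanning `ℝⁿ` over `ℝ`) and `φ : ℚⁿ/ℤⁿ → ℚΛ/Λ` is a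
homomorphism of abelian groups.  The homomorphism `φ` is encoded as an additive
homomorphism `ℚⁿ → ℝⁿ/Λ` which kills `ℤⁿ` and whose values are classes of elements of
the `ℚ`-span `ℚΛ` of `Λ`. -/
structure QLattice (n : ℕ) where
  /-- The lattice `Λ ⊆ ℝⁿ`. -/
  L : Submodule ℤ (Fin n → ℝ)
  discrete : DiscreteTopology ↥L
  spans : Submodule.span ℝ (L : Set (Fin n → ℝ)) = ⊤
  /-- The labelling homomorphism `φ : ℚⁿ/ℤⁿ → ℚΛ/Λ`. -/
  φ : (Fin n → ℚ) →+ (Fin n → ℝ) ⧸ L.toAddSubgroup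
  φ_int : ∀ x : Fin n → ℤ, φ (fun i => (x i : ℚ)) = 0
  φ_mem : ∀ x : Fin n → ℚ,
    ∃ y ∈ Submodule.span ℚ (L : Set (Fin n → ℝ)), φ x = QuotientAddGroup.mk y

/-- Two `n`-dimensional `ℚ`-lattices `(Λ₁, φ₁)` and `(Λ₂, φ₂)` are commensurable if
`ℚΛ₁ = ℚΛ₂` and `φ₁ = φ₂` modulo `Λ₁ + Λ₂`, i.e. the compositions of `φ₁` and `φ₂`
with the projection onto `ℚΛ₁/(Λ₁ + Λ₂)` agree. -/
def QLattice.Commensurable {n : ℕ} (A B : QLattice n) : Prop :=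
  Submodule.span ℚ (A.L : Set (Fin n → ℝ)) = Submodule.span ℚ (B.L : Set (Fin n → ℝ)) ∧
    ∀ x : Fin n → ℚ,
      QuotientAddGroup.map A.L.toAddSubgroup (A.L ⊔ B.L).toAddSubgroup
          (AddMonoidHom.id _) (fun _ hy => Submodule.mem_sup_left hy) (A.φ x) =
        QuotientAddGroup.map B.L.toAddSubgroup (A.L ⊔ B.L).toAddSubgroup
          (AddMonoidHom.id _) (fun _ hy => Submodule.mem_sup_right hy) (B.φ x)

open Submodule in
/-- Clearing denominators: an element of the `ℚ`-span of a `ℤ`-submodule has a nonzero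
integer multiple inside the submodule. -/
lemma QLattice.exists_int_smul_mem {M : Type*} [AddCommGroup M] [Module ℚ M]
    (L : Submodule ℤ M) {x : M} (hx : x ∈ Submodule.span ℚ (L : Set M)) :
    ∃ m : ℤ, m ≠ 0 ∧ m • x ∈ L := by
  induction hx using Submodule.span_induction with
  | mem x hx => exact ⟨1, one_ne_zero, by simpa using hx⟩
  | zero => exact ⟨1, one_ne_zero, by simp⟩
  | add x y _ _ hx hy =>
      obtain ⟨a, ha, hax⟩ := hx
      obtain ⟨b, hb, hby⟩ := hy
      refine ⟨a * b, mul_ne_zero ha hb, ?_⟩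
      have hx' : (a * b) • x = b • (a • x) := by rw [mul_comm, mul_smul]
      have hy' : (a * b) • y = a • (b • y) := by rw [mul_smul]
      rw [smul_add, hx', hy']
      exact L.add_mem (L.smul_mem b hax) (L.smul_mem a hby)
  | smul q x _ hx =>
      obtain ⟨a, ha, hax⟩ := hx
      refine ⟨(q.den : ℤ) * a, mul_ne_zero (Int.natCast_ne_zero.2 q.den_nz) ha, ?_⟩
      have hd : (q.den : ℚ) * q = (q.num : ℚ) := by
        have h0 : (q.den : ℚ) ≠ 0 := Nat.cast_ne_zero.2 q.den_nz
        rw [mul_comm, ← eq_div_iff h0]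
        exact (Rat.num_div_den q).symm
      have key : ((q.den : ℤ) * a) • (q • x) = q.num • (a • x) := by
        rw [← Int.cast_smul_eq_zsmul ℚ ((q.den : ℤ) * a), ← Int.cast_smul_eq_zsmul ℚ q.num,
          ← Int.cast_smul_eq_zsmul ℚ a, smul_smul, smul_smul]
        congr 1
        push_cast
        rw [← hd]
        ring
      rw [key]
      exact L.smul_mem q.num hax

open Submodule in
/-- A uniform denominator: if `L` is a lattice (discrete and spanning) whose `ℚ`-span
is contained in the `ℚ`-span of `L'`, then some nonzero integer multiple of `L` lands
in `L'`. -/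
lemma QLattice.exists_uniform_int_smul {n : ℕ} (L L' : Submodule ℤ (Fin n → ℝ))
    (hd : DiscreteTopology ↥L) (hs : Submodule.span ℝ (L : Set (Fin n → ℝ)) = ⊤)
    (hQ : (L : Set (Fin n → ℝ)) ⊆ Submodule.span ℚ (L' : Set (Fin n → ℝ))) :
    ∃ m : ℤ, m ≠ 0 ∧ ∀ v ∈ L, m • v ∈ L' := by
  classical
  haveI := hd
  haveI : IsZLattice ℝ L := ⟨hs⟩
  obtain ⟨s, hsL⟩ := ZLattice.FG ℝ L
  choose f hf0 hfmem using fun v : {v : Fin n → ℝ // v ∈ s} =>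
    QLattice.exists_int_smul_mem L' (hQ (by
      rw [← hsL]
      exact Submodule.subset_span v.2))
  refine ⟨∏ v : {v : Fin n → ℝ // v ∈ s}, f v, Finset.prod_ne_zero_iff.2 fun v _ => hf0 v, ?_⟩
  intro v hv
  rw [← hsL] at hv
  have : v ∈ Submodule.comap
      ((∏ w : {v : Fin n → ℝ // v ∈ s}, f w) • (LinearMap.id : (Fin n → ℝ) →ₗ[ℤ] Fin n → ℝ))
      L' := by
    refine Submodule.span_le.2 ?_ hv
    intro w hw
    simp only [SetLike.mem_coe, Submodule.mem_comap, LinearMap.smul_apply, LinearMap.id_apply]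
    have : (∏ u : {v : Fin n → ℝ // v ∈ s}, f u) • w
        = (∏ u ∈ Finset.univ.erase ⟨w, hw⟩, f u) • (f ⟨w, hw⟩ • w) := by
      rw [← mul_smul, ← Finset.mul_prod_erase Finset.univ f (Finset.mem_univ ⟨w, hw⟩),
        mul_comm]
    rw [this]
    exact L'.smul_mem _ (hfmem ⟨w, hw⟩)
  simpa using this

open Submodule QuotientAddGroup in
/-- Reformulation of the second condition of commensurability in terms of representatives. -/
lemma QLattice.commensurable_iff {n : ℕ} (A B : QLattice n) :
    A.Commensurable B ↔
      (Submodule.span ℚ (A.L : Set (Fin n → ℝ)) = Submodule.span ℚ (B.L : Set (Fin n → ℝ)) ∧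
        ∀ (x : Fin n → ℚ) (r s : Fin n → ℝ),
          A.φ x = QuotientAddGroup.mk r → B.φ x = QuotientAddGroup.mk s →
          r - s ∈ A.L ⊔ B.L) := by
  constructor
  · rintro ⟨h1, h2⟩
    refine ⟨h1, fun x r s hr hs => ?_⟩
    have := h2 x
    erw [hr, hs, QuotientAddGroup.map_mk, QuotientAddGroup.map_mk] at this
    simpa using (QuotientAddGroup.eq_iff_sub_mem.1 this)
  · rintro ⟨h1, h2⟩
    refine ⟨h1, fun x => ?_⟩
    obtain ⟨r, hr⟩ := QuotientAddGroup.mk_surjective (A.φ x)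
    obtain ⟨s, hs⟩ := QuotientAddGroup.mk_surjective (B.φ x)
    erw [← hr, ← hs, QuotientAddGroup.map_mk, QuotientAddGroup.map_mk]
    exact QuotientAddGroup.eq_iff_sub_mem.2 (h2 x r s hr.symm hs.symm)

/-- Commensurability is an equivalence relation on the set of `n`-dimensional
`ℚ`-lattices: it is reflexive, symmetric and transitive. -/
theorem QLattice.commensurable_equivalence (n : ℕ) :
    Equivalence (QLattice.Commensurable (n := n)) := by
  constructor
  · -- reflexivity
    intro A
    rw [QLattice.commensurable_iff]
    refine ⟨rfl, fun x r s hr hs => ?_⟩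
    have : (QuotientAddGroup.mk r : (Fin n → ℝ) ⧸ A.L.toAddSubgroup) = QuotientAddGroup.mk s :=
      hr.symm.trans hs
    have hmem : r - s ∈ A.L := by
      simpa using QuotientAddGroup.eq_iff_sub_mem.1 this
    exact Submodule.mem_sup_left hmem
  · -- symmetry
    intro A B h
    rw [QLattice.commensurable_iff] at h ⊢
    obtain ⟨h1, h2⟩ := h
    refine ⟨h1.symm, fun x r s hr hs => ?_⟩
    rw [sup_comm]
    have := h2 x s r hs hr
    simpa using (A.L ⊔ B.L).neg_mem this
  · -- transitivity
    intro A B C hAB hBC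
    rw [QLattice.commensurable_iff] at hAB hBC ⊢
    obtain ⟨hAB1, hAB2⟩ := hAB
    obtain ⟨hBC1, hBC2⟩ := hBC
    refine ⟨hAB1.trans hBC1, fun x r t hr ht => ?_⟩
    -- uniform denominator for B with respect to A
    obtain ⟨m, hm0, hm⟩ := QLattice.exists_uniform_int_smul B.L A.L B.discrete B.spans
      (fun v hv => by
        have : v ∈ Submodule.span ℚ (B.L : Set (Fin n → ℝ)) := Submodule.subset_span hv
        rwa [← hAB1] at this)
    -- divide x by m
    set y : Fin n → ℚ := ((m : ℚ))⁻¹ • x with hy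
    have hmy : (m : ℤ) • y = x := by
      rw [hy, ← Int.cast_smul_eq_zsmul ℚ m, smul_smul,
        mul_inv_cancel₀ (by exact_mod_cast hm0), one_smul]
    obtain ⟨r', hr'⟩ := QuotientAddGroup.mk_surjective (A.φ y)
    obtain ⟨s', hs'⟩ := QuotientAddGroup.mk_surjective (B.φ y)
    obtain ⟨t', ht'⟩ := QuotientAddGroup.mk_surjective (C.φ y)
    have h1 : r' - s' ∈ A.L ⊔ B.L := hAB2 y r' s' hr'.symm hs'.symm
    have h2 : s' - t' ∈ B.L ⊔ C.L := hBC2 y s' t' hs'.symm ht'.symm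
    obtain ⟨a, haA, b₁, hb₁, hab⟩ := Submodule.mem_sup.1 h1
    obtain ⟨b₂, hb₂, c, hcC, hbc⟩ := Submodule.mem_sup.1 h2
    -- A.φ x = mk (m • r'), C.φ x = mk (m • t')
    have hAx : A.φ x = QuotientAddGroup.mk (m • r') := by
      rw [← hmy, map_zsmul, ← hr']
      exact (map_zsmul (QuotientAddGroup.mk' A.L.toAddSubgroup) m r').symm
    have hCx : C.φ x = QuotientAddGroup.mk (m • t') := by
      rw [← hmy, map_zsmul, ← ht']
      exact (map_zsmul (QuotientAddGroup.mk' C.L.toAddSubgroup) m t').symm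
    have hru : r - m • r' ∈ A.L := by
      simpa using QuotientAddGroup.eq_iff_sub_mem.1 (hr.symm.trans hAx)
    have htv : t - m • t' ∈ C.L := by
      simpa using QuotientAddGroup.eq_iff_sub_mem.1 (ht.symm.trans hCx)
    have hsplit : r' - t' = a + b₁ + (b₂ + c) := by
      rw [hab, hbc]; abel
    have h3 : m • r' - m • t' = m • a + m • b₁ + (m • b₂ + m • c) := by
      rw [← smul_sub, hsplit, smul_add, smul_add, smul_add]
    have hkey : r - t = ((r - m • r') + (m • a + (m • b₁ + m • b₂))) +
        (m • c - (t - m • t')) := by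
      calc r - t = (r - m • r') + (m • r' - m • t') + (m • t' - t) := by abel
        _ = (r - m • r') + (m • a + m • b₁ + (m • b₂ + m • c)) + (m • t' - t) := by rw [h3]
        _ = ((r - m • r') + (m • a + (m • b₁ + m • b₂))) + (m • c - (t - m • t')) := by abel
    rw [hkey]
    refine Submodule.add_mem _ (Submodule.mem_sup_left ?_) (Submodule.mem_sup_right ?_)
    · exact Submodule.add_mem _ hru (Submodule.add_mem _ (A.L.smul_mem m haA)
        (Submodule.add_mem _ (hm b₁ hb₁) (hm b₂ hb₂)))
    · exact Submodule.sub_mem _ (C.L.smul_mem m hcC) htv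
end

section
/- Commensurability is an equivalence relation on the set of one-dimensional K-lattices: the relation defined by (Λ₁, φ₁) ∼ (Λ₂, φ₂) if and only if KΛ₁ = KΛ₂ and φ₁ = φ₂ modulo Λ₁ + Λ₂ is reflexive, symmetric, and transitive. -/
/-- The ring of integers `𝒪` of a subfield `K` of `ℂ`: the elements of `K` that are
integral over `ℤ`. -/
def ringOfIntegersIn (K : Subfield ℂ) : Subring ℂ :=
  K.toSubring ⊓ (integralClosure ℤ ℂ).toSubring

/-- A one-dimensional `K`-lattice for a subfield `K ⊆ ℂ` with ring of integers `𝒪`: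
a pair `(Λ, φ)` where `Λ` is a nonzero finitely generated `𝒪`-submodule of `ℂ` and
`φ : K/𝒪 → KΛ/Λ` is a homomorphism of abelian groups.  The homomorphism `φ` is encoded
as an additive homomorphism `K → ℂ/Λ` which kills `𝒪` and whose values are classes of
elements of `KΛ`. -/
structure KLattice (K : Subfield ℂ) where
  /-- The lattice `Λ ⊆ ℂ`, an `𝒪`-submodule. -/
  L : Submodule ↥(ringOfIntegersIn K) ℂ
  ne_bot : L ≠ ⊥
  fg : L.FG
  /-- The labelling homomorphism `φ : K/𝒪 → KΛ/Λ`. -/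
  φ : ↥K →+ ℂ ⧸ L.toAddSubgroup
  φ_int : ∀ x : ↥K, (x : ℂ) ∈ ringOfIntegersIn K → φ x = 0
  φ_mem : ∀ x : ↥K,
    ∃ y ∈ Submodule.span ↥K (L : Set ℂ), φ x = QuotientAddGroup.mk y

/-- Two one-dimensional `K`-lattices `(Λ₁, φ₁)` and `(Λ₂, φ₂)` are commensurable if
`KΛ₁ = KΛ₂` and `φ₁ = φ₂` modulo `Λ₁ + Λ₂`, i.e. the compositions of `φ₁` and `φ₂`
with the projection onto `KΛ₁/(Λ₁ + Λ₂)` agree. -/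
def KLattice.Commensurable {K : Subfield ℂ} (A B : KLattice K) : Prop :=
  Submodule.span ↥K (A.L : Set ℂ) = Submodule.span ↥K (B.L : Set ℂ) ∧
    ∀ x : ↥K,
      QuotientAddGroup.map A.L.toAddSubgroup (A.L ⊔ B.L).toAddSubgroup
          (AddMonoidHom.id _) (fun _ hy => Submodule.mem_sup_left hy) (A.φ x) =
        QuotientAddGroup.map B.L.toAddSubgroup (A.L ⊔ B.L).toAddSubgroup
          (AddMonoidHom.id _) (fun _ hy => Submodule.mem_sup_right hy) (B.φ x)

/-- Comparing two quotient classes after mapping into a common quotient amounts to a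
difference of representatives lying in the common subgroup. -/
lemma KLattice.map_eq_map_iff {H₁ H₂ N : AddSubgroup ℂ} [N.Normal]
    (h₁ : H₁ ≤ N.comap (AddMonoidHom.id ℂ)) (h₂ : H₂ ≤ N.comap (AddMonoidHom.id ℂ))
    (a b : ℂ) :
    QuotientAddGroup.map H₁ N (AddMonoidHom.id ℂ) h₁ (QuotientAddGroup.mk a) =
      QuotientAddGroup.map H₂ N (AddMonoidHom.id ℂ) h₂ (QuotientAddGroup.mk b) ↔
      a - b ∈ N := by
  rw [QuotientAddGroup.map_mk, QuotientAddGroup.map_mk, AddMonoidHom.id_apply,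
    AddMonoidHom.id_apply, QuotientAddGroup.eq_iff_sub_mem]

/-- Every element of `K` has a nonzero integer multiple lying in the ring of integers. -/
lemma KLattice.exists_int_mul_mem (d : ℕ+) (K : Subfield ℂ)
    (hK : ∀ z : ℂ, z ∈ K ↔ ∃ a b : ℚ, z = a + b * (Complex.I * Real.sqrt d))
    (k : ↥K) :
    ∃ n : ℤ, n ≠ 0 ∧ ((n : ℂ) * (k : ℂ)) ∈ ringOfIntegersIn K := by
  obtain ⟨a, b, hab⟩ := (hK (k : ℂ)).mp k.2
  refine ⟨(a.den : ℤ) * (b.den : ℤ), by positivity, ?_⟩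
  have hsqrt : IsIntegral ℤ (Complex.I * (Real.sqrt d : ℂ)) := by
    apply IsIntegral.of_pow (n := 2) (by norm_num)
    have : (Complex.I * (Real.sqrt d : ℂ)) ^ 2 = ((-(d : ℤ) : ℤ) : ℂ) := by
      have hd : ((Real.sqrt d : ℝ) : ℂ) ^ 2 = ((d : ℝ) : ℂ) := by
        push_cast [← Complex.ofReal_pow]
        norm_cast
        exact Real.sq_sqrt (by positivity)
      rw [mul_pow, Complex.I_sq, hd]
      push_cast
      ring
    rw [this]
    exact isIntegral_algebraMap (x := (-(d : ℤ) : ℤ))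
  have key : ((((a.den : ℤ) * (b.den : ℤ) : ℤ)) : ℂ) * (k : ℂ) =
      ((a.num * (b.den : ℤ) : ℤ) : ℂ) +
        (((a.den : ℤ) * b.num : ℤ) : ℂ) * (Complex.I * Real.sqrt d) := by
    have ha : ((a.den : ℚ) * a : ℚ) = (a.num : ℚ) := by
      rw [mul_comm, Rat.mul_den_eq_num]
    have hb : ((b.den : ℚ) * b : ℚ) = (b.num : ℚ) := by
      rw [mul_comm, Rat.mul_den_eq_num]
    have ha' : ((a.den : ℂ) * (a : ℂ)) = (a.num : ℂ) := by exact_mod_cast congrArg (Rat.cast (K := ℂ)) ha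
    have hb' : ((b.den : ℂ) * (b : ℂ)) = (b.num : ℂ) := by exact_mod_cast congrArg (Rat.cast (K := ℂ)) hb
    rw [hab]
    push_cast
    linear_combination ((b.den : ℂ)) * ha' + (Complex.I * (Real.sqrt d : ℂ)) * (a.den : ℂ) * hb'
  constructor
  · -- membership in K
    exact K.toSubring.mul_mem (by exact_mod_cast intCast_mem K.toSubring ((a.den : ℤ) * (b.den : ℤ))) k.2
  · -- integrality
    show ((((a.den : ℤ) * (b.den : ℤ) : ℤ)) : ℂ) * (k : ℂ) ∈ integralClosure ℤ ℂ
    rw [key]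
    exact add_mem (isIntegral_algebraMap (x := (a.num * (b.den : ℤ) : ℤ)))
      (mul_mem (isIntegral_algebraMap (x := ((a.den : ℤ) * b.num : ℤ))) hsqrt)


/-- A submodule over the ring of integers is closed under integer multiplication. -/
lemma KLattice.int_mul_mem {K : Subfield ℂ} (M : Submodule ↥(ringOfIntegersIn K) ℂ)
    (m : ℤ) {w : ℂ} (hw : w ∈ M) : (m : ℂ) * w ∈ M := by
  simpa [zsmul_eq_mul] using M.toAddSubgroup.zsmul_mem hw m

/-- Clearing denominators: every element of the `K`-span of a lattice has a nonzero
integer multiple in the lattice. -/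
lemma KLattice.exists_int_mul_mem_of_mem_span (d : ℕ+) (K : Subfield ℂ)
    (hK : ∀ z : ℂ, z ∈ K ↔ ∃ a b : ℚ, z = a + b * (Complex.I * Real.sqrt d))
    (M : Submodule ↥(ringOfIntegersIn K) ℂ) {z : ℂ}
    (hz : z ∈ Submodule.span ↥K (M : Set ℂ)) :
    ∃ n : ℤ, n ≠ 0 ∧ (n : ℂ) * z ∈ M := by
  induction hz using Submodule.span_induction with
  | mem x hx => exact ⟨1, one_ne_zero, by simpa using hx⟩
  | zero => exact ⟨1, one_ne_zero, by simpa using M.zero_mem⟩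
  | add x y hx hy ihx ihy =>
    obtain ⟨n, hn, hnx⟩ := ihx
    obtain ⟨m, hm, hmy⟩ := ihy
    refine ⟨n * m, mul_ne_zero hn hm, ?_⟩
    have : ((n * m : ℤ) : ℂ) * (x + y) = (m : ℂ) * ((n : ℂ) * x) + (n : ℂ) * ((m : ℂ) * y) := by
      push_cast; ring
    rw [this]
    exact add_mem (KLattice.int_mul_mem M m hnx) (KLattice.int_mul_mem M n hmy)
  | smul k x hx ih =>
    obtain ⟨n, hn, hnx⟩ := ih
    obtain ⟨m, hm, hmk⟩ := KLattice.exists_int_mul_mem d K hK k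
    refine ⟨m * n, mul_ne_zero hm hn, ?_⟩
    have hsmul : (k • x : ℂ) = (k : ℂ) * x := rfl
    have heq : ((m * n : ℤ) : ℂ) * (k • x) =
        (⟨(m : ℂ) * (k : ℂ), hmk⟩ : ↥(ringOfIntegersIn K)) • ((n : ℂ) * x) := by
      show ((m * n : ℤ) : ℂ) * ((k : ℂ) * x) = ((m : ℂ) * (k : ℂ)) * ((n : ℂ) * x)
      push_cast; ring
    rw [heq]
    exact M.smul_mem _ hnx

/-- Uniform clearing of denominators for a finitely generated lattice contained in the
`K`-span of another lattice. -/
lemma KLattice.exists_int_forall_mul_mem (d : ℕ+) (K : Subfield ℂ)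
    (hK : ∀ z : ℂ, z ∈ K ↔ ∃ a b : ℚ, z = a + b * (Complex.I * Real.sqrt d))
    (M₁ M₂ : Submodule ↥(ringOfIntegersIn K) ℂ) (hfg : M₂.FG)
    (hle : (M₂ : Set ℂ) ⊆ (Submodule.span ↥K (M₁ : Set ℂ) : Set ℂ)) :
    ∃ N : ℤ, N ≠ 0 ∧ ∀ g ∈ M₂, (N : ℂ) * g ∈ M₁ := by
  obtain ⟨S, hS⟩ := hfg
  have hchoice : ∀ s : {x // x ∈ S}, ∃ n : ℤ, n ≠ 0 ∧ (n : ℂ) * (s : ℂ) ∈ M₁ := by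
    intro s
    refine KLattice.exists_int_mul_mem_of_mem_span d K hK M₁ (hle ?_)
    rw [← hS]
    exact Submodule.subset_span s.2
  choose n hn hnmem using hchoice
  refine ⟨∏ s ∈ S.attach, n s, Finset.prod_ne_zero_iff.mpr fun s _ => hn s, ?_⟩
  intro g hg
  rw [← hS] at hg
  induction hg using Submodule.span_induction with
  | mem x hx =>
    obtain ⟨m, hm⟩ := Finset.dvd_prod_of_mem n (Finset.mem_attach S ⟨x, hx⟩)
    rw [hm]
    have : ((n ⟨x, hx⟩ * m : ℤ) : ℂ) * x = (m : ℂ) * ((n ⟨x, hx⟩ : ℂ) * x) := by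
      push_cast; ring
    rw [this]
    exact KLattice.int_mul_mem M₁ m (hnmem ⟨x, hx⟩)
  | zero => simpa using M₁.zero_mem
  | add x y hx hy ihx ihy =>
    rw [mul_add]
    exact add_mem ihx ihy
  | smul o x hx ih =>
    have : (∏ s ∈ S.attach, n s : ℤ) • (o • x) = o • (((∏ s ∈ S.attach, n s : ℤ) : ℂ) * x) := by
      rw [smul_comm, zsmul_eq_mul]
    have h2 : ((∏ s ∈ S.attach, n s : ℤ) : ℂ) * (o • x) =
        o • (((∏ s ∈ S.attach, n s : ℤ) : ℂ) * x) := by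
      rw [← zsmul_eq_mul, this]
    rw [h2]
    exact M₁.smul_mem o ih

/-- Let `K = ℚ(√-d) ⊆ ℂ` be an imaginary quadratic field.  Commensurability is an
equivalence relation on the set of one-dimensional `K`-lattices: it is reflexive,
symmetric and transitive. -/
theorem KLattice.commensurable_equivalence (d : ℕ+) (K : Subfield ℂ)
    (hK : ∀ z : ℂ, z ∈ K ↔ ∃ a b : ℚ, z = a + b * (Complex.I * Real.sqrt d)) :
    Equivalence (KLattice.Commensurable (K := K)) := by
  constructor
  · -- reflexivity
    intro A
    exact ⟨rfl, fun x => rfl⟩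
  · -- symmetry
    rintro A B ⟨hspan, hφ⟩
    refine ⟨hspan.symm, fun x => ?_⟩
    obtain ⟨a, ha⟩ := QuotientAddGroup.mk_surjective (A.φ x)
    obtain ⟨b, hb⟩ := QuotientAddGroup.mk_surjective (B.φ x)
    have hab : a - b ∈ A.L ⊔ B.L := by
      have := hφ x
      rw [← ha, ← hb] at this
      replace this := (KLattice.map_eq_map_iff _ _ a b).mp this
      exact this
    rw [← ha, ← hb]
    refine (KLattice.map_eq_map_iff _ _ b a).mpr ?_
    show b - a ∈ (B.L ⊔ A.L : Submodule ↥(ringOfIntegersIn K) ℂ)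
    rw [sup_comm]
    simpa using neg_mem hab
  · -- transitivity
    rintro A B C ⟨hspanAB, hφAB⟩ ⟨hspanBC, hφBC⟩
    refine ⟨hspanAB.trans hspanBC, fun x => ?_⟩
    obtain ⟨N, hN0, hNall⟩ := KLattice.exists_int_forall_mul_mem d K hK A.L B.L B.fg
      (by intro g hg; rw [hspanAB]; exact Submodule.subset_span hg)
    have hNK : (N : ↥K) ≠ 0 := Int.cast_ne_zero.mpr hN0
    set y : ↥K := (N : ↥K)⁻¹ * x with hy
    have hxy : x = N • y := by
      rw [hy, zsmul_eq_mul, ← mul_assoc, mul_inv_cancel₀ hNK, one_mul]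
    obtain ⟨a, ha⟩ := QuotientAddGroup.mk_surjective (A.φ y)
    obtain ⟨b, hb⟩ := QuotientAddGroup.mk_surjective (B.φ y)
    obtain ⟨c, hc⟩ := QuotientAddGroup.mk_surjective (C.φ y)
    have hab : a - b ∈ A.L ⊔ B.L := by
      have := hφAB y
      rw [← ha, ← hb] at this
      replace this := (KLattice.map_eq_map_iff _ _ a b).mp this
      exact this
    have hbc : b - c ∈ B.L ⊔ C.L := by
      have := hφBC y
      rw [← hb, ← hc] at this
      replace this := (KLattice.map_eq_map_iff _ _ b c).mp this
      exact this
    rw [Submodule.mem_sup] at hab hbc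
    obtain ⟨p, hp, q, hq, hpq⟩ := hab
    obtain ⟨r, hr, s, hs, hrs⟩ := hbc
    have hAx : A.φ x = QuotientAddGroup.mk ((N : ℂ) * a) := by
      rw [hxy, map_zsmul, ← ha, ← zsmul_eq_mul, ← QuotientAddGroup.mk_zsmul]
    have hCx : C.φ x = QuotientAddGroup.mk ((N : ℂ) * c) := by
      rw [hxy, map_zsmul, ← hc, ← zsmul_eq_mul, ← QuotientAddGroup.mk_zsmul]
    rw [hAx, hCx]
    refine (KLattice.map_eq_map_iff _ _ _ _).mpr ?_
    show (N : ℂ) * a - (N : ℂ) * c ∈ (A.L ⊔ C.L : Submodule ↥(ringOfIntegersIn K) ℂ)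
    have h1 : (N : ℂ) * p + (N : ℂ) * q + (N : ℂ) * r ∈ A.L :=
      add_mem (add_mem (KLattice.int_mul_mem A.L N hp) (hNall q hq)) (hNall r hr)
    have h2 : (N : ℂ) * s ∈ C.L := KLattice.int_mul_mem C.L N hs
    have heq : (N : ℂ) * a - (N : ℂ) * c =
        ((N : ℂ) * p + (N : ℂ) * q + (N : ℂ) * r) + (N : ℂ) * s := by
      linear_combination (-(N : ℂ)) * hpq + (-(N : ℂ)) * hrs
    rw [heq]
    exact Submodule.add_mem_sup h1 h2
end

section
/- Let P⁺_ℚ be the subgroup of GL₂(ℚ) consisting of matrices [[1, b],[0, a]] with b ∈ ℚ and a ∈ ℚ positive, and let P⁺_ℤ be the subgroup consisting of matrices [[1, c],[0, 1]] with c ∈ ℤ. Then the inclusion P⁺_ℤ ⊂ P⁺_ℚ is almost normal: for every g ∈ P⁺_ℚ, the orbit of the right coset gP⁺_ℤ under the left action of P⁺_ℤ on P⁺_ℚ/P⁺_ℤ is finite, and likewise the orbit of the left coset P⁺_ℤ g under the right action of P⁺_ℤ on P⁺_ℤ\P⁺_ℚ is finite. -/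
/-- The subgroup `P⁺_ℚ` of `GL₂(ℚ)` of matrices `[[1, b], [0, a]]` with `b ∈ ℚ` and
`a ∈ ℚ` positive, realized as a set of invertible matrices. -/
def PQplus : Set (GL (Fin 2) ℚ) :=
  {g | (g : Matrix (Fin 2) (Fin 2) ℚ) 0 0 = 1 ∧
       (g : Matrix (Fin 2) (Fin 2) ℚ) 1 0 = 0 ∧
       0 < (g : Matrix (Fin 2) (Fin 2) ℚ) 1 1}

/-- The subgroup `P⁺_ℤ` of `GL₂(ℚ)` of matrices `[[1, c], [0, 1]]` with `c ∈ ℤ`. -/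
def PZplus : Set (GL (Fin 2) ℚ) :=
  {g | (g : Matrix (Fin 2) (Fin 2) ℚ) 0 0 = 1 ∧
       (g : Matrix (Fin 2) (Fin 2) ℚ) 1 0 = 0 ∧
       (g : Matrix (Fin 2) (Fin 2) ℚ) 1 1 = 1 ∧
       ∃ c : ℤ, (g : Matrix (Fin 2) (Fin 2) ℚ) 0 1 = (c : ℚ)}

/-- The upper unitriangular matrix `[[1, r], [0, 1]]` as an element of `GL₂(ℚ)`. -/
def U (r : ℚ) : GL (Fin 2) ℚ :=
  ⟨!![1, r; 0, 1], !![1, -r; 0, 1],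
    by ext i j; fin_cases i <;> fin_cases j <;>
      simp [Matrix.mul_apply, Fin.sum_univ_two, Matrix.one_apply],
    by ext i j; fin_cases i <;> fin_cases j <;>
      simp [Matrix.mul_apply, Fin.sum_univ_two, Matrix.one_apply]⟩

lemma U_mul (r s : ℚ) : U r * U s = U (r + s) := by
  ext i j
  fin_cases i <;> fin_cases j <;>
    simp [U, Matrix.mul_apply, Fin.sum_univ_two] <;> ring

lemma mem_PZ_iff (γ : GL (Fin 2) ℚ) : γ ∈ PZplus ↔ ∃ c : ℤ, γ = U (c : ℚ) := by
  constructor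
  · rintro ⟨h1, h2, h3, c, h4⟩
    refine ⟨c, ?_⟩
    ext i j
    fin_cases i <;> fin_cases j <;> simp_all [U]
  · rintro ⟨c, rfl⟩
    exact ⟨rfl, rfl, rfl, c, rfl⟩

lemma swapU (g : GL (Fin 2) ℚ) (h1 : (g : Matrix (Fin 2) (Fin 2) ℚ) 0 0 = 1)
    (h2 : (g : Matrix (Fin 2) (Fin 2) ℚ) 1 0 = 0) (r : ℚ) :
    U r * g = g * U (r * (g : Matrix (Fin 2) (Fin 2) ℚ) 1 1) := by
  ext i j
  fin_cases i <;> fin_cases j <;>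
    simp_all [U, Matrix.mul_apply, Fin.sum_univ_two] <;> ring

lemma cosL_subset (g : GL (Fin 2) ℚ) (hg : g ∈ PQplus) (c c' m : ℤ)
    (hm : ((c : ℚ) - c') * (g : Matrix (Fin 2) (Fin 2) ℚ) 1 1 = (m : ℚ)) :
    {x | ∃ p ∈ PZplus, x = U (c : ℚ) * g * p} ⊆
    {x | ∃ p ∈ PZplus, x = U (c' : ℚ) * g * p} := by
  rintro x ⟨p, hp, rfl⟩
  obtain ⟨d, rfl⟩ := (mem_PZ_iff p).1 hp
  refine ⟨U ((m : ℚ)) * U (d : ℚ), ?_, ?_⟩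
  · rw [U_mul]; exact (mem_PZ_iff _).2 ⟨m + d, by push_cast; ring⟩
  · have h1 : U (c : ℚ) = U (c' : ℚ) * U ((c : ℚ) - c') := by rw [U_mul]; ring_nf
    rw [h1, mul_assoc (U (c':ℚ)), swapU g hg.1 hg.2.1, hm]
    group

lemma cosL_eq (g : GL (Fin 2) ℚ) (hg : g ∈ PQplus) (c c' m : ℤ)
    (hm : ((c : ℚ) - c') * (g : Matrix (Fin 2) (Fin 2) ℚ) 1 1 = (m : ℚ)) :
    {x | ∃ p ∈ PZplus, x = U (c : ℚ) * g * p} =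
    {x | ∃ p ∈ PZplus, x = U (c' : ℚ) * g * p} :=
  Set.Subset.antisymm (cosL_subset g hg c c' m hm)
    (cosL_subset g hg c' c (-m) (by push_cast at hm ⊢; linear_combination -hm))

lemma cosR_subset (g : GL (Fin 2) ℚ) (hg : g ∈ PQplus) (c c' m : ℤ)
    (hm : ((c : ℚ) - c') = (m : ℚ) * (g : Matrix (Fin 2) (Fin 2) ℚ) 1 1) :
    {x | ∃ p ∈ PZplus, x = p * g * U (c : ℚ)} ⊆
    {x | ∃ p ∈ PZplus, x = p * g * U (c' : ℚ)} := by
  rintro x ⟨p, hp, rfl⟩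
  refine ⟨p * U (m : ℚ), ?_, ?_⟩
  · obtain ⟨d, rfl⟩ := (mem_PZ_iff p).1 hp
    rw [U_mul]; exact (mem_PZ_iff _).2 ⟨d + m, by push_cast; ring⟩
  · have h2 : U (m : ℚ) * g = g * U ((c : ℚ) - c') := by
      rw [swapU g hg.1 hg.2.1, ← hm]
    have h3 : U (c : ℚ) = U ((c : ℚ) - c') * U (c' : ℚ) := by rw [U_mul]; ring_nf
    have h4 : p * g * U (c : ℚ) = p * (g * U ((c:ℚ) - c')) * U (c' : ℚ) := by
      rw [h3]; group
    rw [h4, ← h2]; group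

lemma cosR_eq (g : GL (Fin 2) ℚ) (hg : g ∈ PQplus) (c c' m : ℤ)
    (hm : ((c : ℚ) - c') = (m : ℚ) * (g : Matrix (Fin 2) (Fin 2) ℚ) 1 1) :
    {x | ∃ p ∈ PZplus, x = p * g * U (c : ℚ)} =
    {x | ∃ p ∈ PZplus, x = p * g * U (c' : ℚ)} :=
  Set.Subset.antisymm (cosR_subset g hg c c' m hm)
    (cosR_subset g hg c' c (-m) (by push_cast at hm ⊢; linear_combination -hm))

/-- The inclusion `P⁺_ℤ ⊂ P⁺_ℚ` is almost normal: for every `g ∈ P⁺_ℚ`, the orbit of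
the right coset `g P⁺_ℤ` under the left action of `P⁺_ℤ` on `P⁺_ℚ / P⁺_ℤ` is finite,
and likewise the orbit of the left coset `P⁺_ℤ g` under the right action of `P⁺_ℤ` on
`P⁺_ℤ \ P⁺_ℚ` is finite. -/
theorem PZplus_almost_normal_in_PQplus :
    ∀ g ∈ PQplus,
      {S : Set (GL (Fin 2) ℚ) | ∃ γ ∈ PZplus,
          S = {x | ∃ p ∈ PZplus, x = γ * g * p}}.Finite ∧
      {S : Set (GL (Fin 2) ℚ) | ∃ γ ∈ PZplus,
          S = {x | ∃ p ∈ PZplus, x = p * g * γ}}.Finite := by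
  intro g hg
  set a : ℚ := (g : Matrix (Fin 2) (Fin 2) ℚ) 1 1 with ha
  have hapos : 0 < a := hg.2.2
  have hda : (a.den : ℚ) * a = (a.num : ℚ) := by
    rw [mul_comm]; exact Rat.mul_den_eq_num a
  constructor
  · haveI : NeZero a.den := ⟨a.den_nz⟩
    apply Set.Finite.subset (Set.finite_range
      (fun k : ZMod a.den => {x | ∃ p ∈ PZplus, x = U (((k.val : ℤ) : ℚ)) * g * p}))
    rintro S ⟨γ, hγ, rfl⟩
    obtain ⟨c, rfl⟩ := (mem_PZ_iff γ).1 hγ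
    refine ⟨(c : ZMod a.den), ?_⟩
    obtain ⟨t, ht⟩ : (a.den : ℤ) ∣ (((c : ZMod a.den).val : ℤ) - c) := by
      rw [← ZMod.intCast_zmod_eq_zero_iff_dvd]
      push_cast
      simp [ZMod.natCast_val, ZMod.intCast_cast]
    refine cosL_eq g hg _ c (t * a.num) ?_
    have hcast : (((c : ZMod a.den).val : ℚ) - c) = (a.den : ℚ) * t := by
      exact_mod_cast congrArg (fun z : ℤ => (z : ℚ)) ht
    push_cast
    push_cast at hcast
    linear_combination a * hcast + t * hda
  · haveI : NeZero a.num.toNat :=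
      ⟨by simpa [Int.toNat_eq_zero, not_le] using Rat.num_pos.2 hapos⟩
    apply Set.Finite.subset (Set.finite_range
      (fun k : ZMod a.num.toNat => {x | ∃ p ∈ PZplus, x = p * g * U (((k.val : ℤ) : ℚ))}))
    rintro S ⟨γ, hγ, rfl⟩
    obtain ⟨c, rfl⟩ := (mem_PZ_iff γ).1 hγ
    refine ⟨(c : ZMod a.num.toNat), ?_⟩
    obtain ⟨t, ht⟩ : (a.num.toNat : ℤ) ∣ (((c : ZMod a.num.toNat).val : ℤ) - c) := by
      rw [← ZMod.intCast_zmod_eq_zero_iff_dvd]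
      push_cast
      simp [ZMod.natCast_val, ZMod.intCast_cast]
    refine cosR_eq g hg _ c (t * a.den) ?_
    have hnum : ((a.num.toNat : ℤ) : ℚ) = (a.num : ℚ) := by
      rw [Int.toNat_of_nonneg (le_of_lt (Rat.num_pos.2 hapos))]
    have hcast : (((c : ZMod a.num.toNat).val : ℚ) - c) = ((a.num.toNat : ℤ) : ℚ) * t := by
      exact_mod_cast congrArg (fun z : ℤ => (z : ℚ)) ht
    rw [hnum] at hcast
    push_cast
    linear_combination hcast - t * hda
end

section
/- Let χ : ℚ/ℤ → ℂˣ be an injective additive character with values in the unit circle, let μₙ (n ∈ ℕ⁺) be the isometries on ℓ²(ℕ⁺) given by μₙ εₖ = ε_{nk}, and let e_χ(r) (r ∈ ℚ/ℤ) be the diagonal operators e_χ(r) εₖ = χ(k·r) εₖ. Then for every n ∈ ℕ⁺ and every r ∈ ℚ/ℤ, μₙ e_χ(r) μₙ* = (1/n) ∑_{s ∈ ℚ/ℤ, n·s = r} e_χ(s), where the sum runs over the n elements s of ℚ/ℤ with n·s = r. -/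
/-- The group `ℚ/ℤ`. -/
abbrev QModZ : Type := ℚ ⧸ AddSubgroup.zmultiples (1 : ℚ)

/-- The Hilbert space `ℓ²(ℕ⁺)`. -/
abbrev l2NatPos : Type := lp (fun _ : ℕ+ => ℂ) 2

/-- The canonical orthonormal basis vector `εₖ` of `ℓ²(ℕ⁺)`. -/
noncomputable def eps (k : ℕ+) : l2NatPos := lp.single 2 k (1 : ℂ)

open scoped InnerProductSpace

local notation "qz" => (QuotientAddGroup.mk : ℚ → QModZ)

lemma qz_nsmul (n : ℕ) (q : ℚ) : n • (qz q) = qz (n * q) := by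
  rw [← QuotientAddGroup.mk_nsmul]; norm_num

lemma qz_eq_iff (a b : ℚ) : qz a = qz b ↔ ∃ m : ℤ, (m : ℚ) = a - b := by
  rw [QuotientAddGroup.eq_iff_sub_mem, AddSubgroup.mem_zmultiples_iff]
  simp

lemma qz_int (m : ℤ) : qz (m : ℚ) = 0 := by
  have : (0 : QModZ) = qz 0 := rfl
  rw [this, qz_eq_iff]
  exact ⟨m, by simp⟩

lemma solset (n : ℕ+) (q : ℚ) (s : QModZ) :
    (n : ℕ) • s = qz q ↔
      s ∈ (Finset.range (n : ℕ)).image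
        (fun i : ℕ => qz (q / (n : ℕ)) + qz ((i : ℚ) / (n : ℕ))) := by
  have hn : ((n : ℕ) : ℚ) ≠ 0 := by positivity
  constructor
  · intro h
    obtain ⟨u, rfl⟩ := QuotientAddGroup.mk_surjective s
    rw [qz_nsmul, qz_eq_iff] at h
    obtain ⟨m, hm⟩ := h
    refine Finset.mem_image.2 ⟨(m % (n : ℕ)).toNat, Finset.mem_range.2 ?_, ?_⟩
    · have h1 : (0:ℤ) < (n:ℕ) := by positivity
      have := Int.emod_lt_of_pos m h1
      omega
    · rw [← QuotientAddGroup.mk_add, qz_eq_iff]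
      refine ⟨-(m / (n:ℕ)), ?_⟩
      have h2 : ((m % (n:ℕ)).toNat : ℚ) = ((m % (n:ℕ) : ℤ) : ℚ) := by
        have h1 : (0:ℤ) < (n:ℕ) := by positivity
        have := Int.emod_nonneg m h1.ne'
        exact_mod_cast congrArg (fun z : ℤ => (z : ℚ)) (Int.toNat_of_nonneg this)
      rw [h2]
      have h3 : ((m % (n:ℕ) : ℤ) : ℚ) = (m : ℚ) - ((n:ℕ) : ℚ) * ((m / (n:ℕ) : ℤ) : ℚ) := by
        rw [Int.emod_def]; push_cast; ring
      rw [h3]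
      field_simp
      push_cast
      linarith [hm]
  · intro h
    obtain ⟨i, hi, rfl⟩ := Finset.mem_image.1 h
    rw [smul_add, qz_nsmul, qz_nsmul]
    rw [mul_div_cancel₀ _ hn]
    have : (n : ℕ) * ((i : ℚ) / (n : ℕ)) = (i : ℚ) := mul_div_cancel₀ _ hn
    rw [this]
    have : qz (i : ℚ) = 0 := by exact_mod_cast qz_int (i : ℤ)
    rw [this, add_zero]

lemma solset_injOn (n : ℕ+) (q : ℚ) :
    Set.InjOn (fun i : ℕ => qz (q / (n : ℕ)) + qz ((i : ℚ) / (n : ℕ)))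
      (Finset.range (n : ℕ)) := by
  intro i hi j hj hij
  simp only [Finset.coe_range, Set.mem_Iio] at hi hj
  have h := add_left_cancel hij
  rw [qz_eq_iff] at h
  obtain ⟨m, hm⟩ := h
  have hn : ((n : ℕ) : ℚ) ≠ 0 := by positivity
  have h2 : ((i : ℤ) : ℚ) - (j : ℤ) = ((n : ℕ) : ℚ) * m := by
    push_cast
    field_simp at hm
    linarith [hm]
  have h3 : (i : ℤ) - j = (n : ℕ) * m := by exact_mod_cast h2
  have h4 : (i : ℤ) - j = 0 := by
    refine Int.eq_zero_of_abs_lt_dvd ⟨m, h3⟩ ?_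
    rw [abs_sub_lt_iff]
    omega
  omega

-- extension lemma
lemma clm_ext_eps {A B : l2NatPos →L[ℂ] l2NatPos} (h : ∀ k, A (eps k) = B (eps k)) : A = B := by
  apply ContinuousLinearMap.ext_on (s := Set.range eps)
  · rw [Submodule.dense_iff_topologicalClosure_eq_top, eq_top_iff]
    rintro f -
    refine mem_closure_of_tendsto (lp.hasSum_single (by norm_num) f)
      (Filter.Eventually.of_forall fun s => ?_)
    refine Submodule.sum_mem _ fun i _ => ?_
    have h1 : lp.single 2 i (f i) = (f i) • eps i := by
      conv_lhs => rw [show (f i : ℂ) = (f i) • (1:ℂ) by simp, lp.single_smul]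
      rfl
    rw [h1]
    exact Submodule.smul_mem _ _ (Submodule.subset_span ⟨i, rfl⟩)
  · rintro x ⟨k, rfl⟩; exact h k

-- coefficient lemma
lemma inner_eps (k : ℕ+) (x : l2NatPos) : ⟪eps k, x⟫_ℂ = x k := by
  rw [eps, lp.inner_single_left]
  simp

lemma eps_apply (i j : ℕ+) : (eps i : ∀ _ : ℕ+, ℂ) j = if j = i then 1 else 0 := by
  rw [eps, lp.single_apply]
  split_ifs with h
  · subst h; simp
  · simp [Pi.single_apply, h]

lemma adjoint_mu_coeff {μ : ℕ+ → (l2NatPos →L[ℂ] l2NatPos)}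
    (hμ : ∀ (n k : ℕ+), μ n (eps k) = eps (n * k)) (n j m : ℕ+) :
    (ContinuousLinearMap.adjoint (μ n) (eps j) : ∀ _ : ℕ+, ℂ) m
      = if n * m = j then 1 else 0 := by
  rw [← inner_eps m _, ContinuousLinearMap.adjoint_inner_right, hμ, inner_eps, eps_apply, eq_comm]

lemma adjoint_mu_eps_mul {μ : ℕ+ → (l2NatPos →L[ℂ] l2NatPos)}
    (hμ : ∀ (n k : ℕ+), μ n (eps k) = eps (n * k)) (n m : ℕ+) :
    ContinuousLinearMap.adjoint (μ n) (eps (n * m)) = eps m := by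
  apply lp.ext
  funext i
  rw [adjoint_mu_coeff hμ, eps_apply]
  by_cases h : i = m
  · subst h; simp
  · rw [if_neg h, if_neg (fun hc => h (mul_left_cancel hc))]

lemma adjoint_mu_eps_not_mul {μ : ℕ+ → (l2NatPos →L[ℂ] l2NatPos)}
    (hμ : ∀ (n k : ℕ+), μ n (eps k) = eps (n * k)) (n j : ℕ+)
    (h : ¬ ∃ m : ℕ+, j = n * m) :
    ContinuousLinearMap.adjoint (μ n) (eps j) = 0 := by
  apply lp.ext
  funext i
  rw [adjoint_mu_coeff hμ, if_neg (fun hc => h ⟨i, hc.symm⟩)]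
  rfl

/-- Let `χ : ℚ/ℤ → ℂˣ` be an injective additive character with values in the unit
circle, let `μₙ` (`n ∈ ℕ⁺`) be the isometries of `ℓ²(ℕ⁺)` given by `μₙ εₖ = ε_{nk}`, and
let `e_χ(r)` (`r ∈ ℚ/ℤ`) be the diagonal operators `e_χ(r) εₖ = χ(k·r) εₖ`.  Then for
every `n ∈ ℕ⁺` and `r ∈ ℚ/ℤ`,
`μₙ e_χ(r) μₙ* = (1/n) ∑_{n·s = r} e_χ(s)`,
the sum running over the `n` elements `s ∈ ℚ/ℤ` with `n·s = r`. -/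
theorem mu_e_chi_mu_star (χ : AddChar QModZ ℂˣ)
    (hχ : ∀ x : QModZ, ‖(χ x : ℂ)‖ = 1)
    (hinj : Function.Injective χ)
    (μ : ℕ+ → (l2NatPos →L[ℂ] l2NatPos))
    (hμ : ∀ (n k : ℕ+), μ n (eps k) = eps (n * k))
    (E : QModZ → (l2NatPos →L[ℂ] l2NatPos))
    (hE : ∀ (r : QModZ) (k : ℕ+), E r (eps k) = ((χ ((k : ℕ) • r) : ℂˣ) : ℂ) • eps k)
    (n : ℕ+) (r : QModZ) :
    μ n ∘L E r ∘L ContinuousLinearMap.adjoint (μ n) =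
      (1 / (n : ℂ)) • ∑ᶠ (s : QModZ) (_ : (n : ℕ) • s = r), E s := by
  obtain ⟨q, rfl⟩ := QuotientAddGroup.mk_surjective r
  set s₀ : QModZ := qz (q / (n : ℕ)) with hs₀
  set T : Finset QModZ :=
    (Finset.range (n : ℕ)).image (fun i : ℕ => s₀ + qz ((i : ℚ) / (n : ℕ))) with hTdef
  have hsum : ∑ᶠ (s : QModZ) (_ : (n : ℕ) • s = qz q), E s = ∑ s ∈ T, E s :=
    finsum_cond_eq_sum_of_cond_iff _ (fun {s} _ => solset n q s)
  rw [hsum]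
  apply clm_ext_eps
  intro j
  have hnQ : ((n : ℕ) : ℚ) ≠ 0 := by positivity
  have hnC : ((n : ℕ) : ℂ) ≠ 0 := by exact_mod_cast (Nat.cast_ne_zero.2 n.ne_zero)
  set t1 : QModZ := qz (1 / (n : ℕ)) with ht1
  set z : ℂ := ((χ ((j : ℕ) • t1) : ℂˣ) : ℂ) with hzdef
  have hnt1 : (n : ℕ) • t1 = 0 := by
    rw [ht1, qz_nsmul, mul_one_div, div_self hnQ]
    exact_mod_cast qz_int (1 : ℤ)
  have hz_pow : ∀ i : ℕ, ((χ ((j : ℕ) • qz ((i : ℚ) / (n : ℕ))) : ℂˣ) : ℂ) = z ^ i := by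
    intro i
    have h1 : (j : ℕ) • (qz ((i : ℚ) / (n : ℕ))) = i • ((j : ℕ) • t1) := by
      rw [ht1, qz_nsmul, ← mul_smul, mul_comm i (j : ℕ), mul_smul, qz_nsmul]
      congr 2
      push_cast
      ring
    rw [h1, AddChar.map_nsmul_eq_pow, Units.val_pow_eq_pow_val]
  have hzn : z ^ (n : ℕ) = 1 := by
    rw [hzdef, ← Units.val_pow_eq_pow_val, ← AddChar.map_nsmul_eq_pow, smul_comm, hnt1,
      smul_zero, AddChar.map_zero_eq_one, Units.val_one]
  have hns0 : (n : ℕ) • s₀ = qz q := by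
    rw [hs₀, qz_nsmul, mul_div_cancel₀ _ hnQ]
  -- RHS evaluated at eps j
  have hRHS : ((1 / (n : ℂ)) • ∑ s ∈ T, E s) (eps j)
      = ((1 / (n : ℂ)) * (((χ ((j : ℕ) • s₀) : ℂˣ) : ℂ) * ∑ i ∈ Finset.range (n : ℕ), z ^ i))
          • eps j := by
    rw [ContinuousLinearMap.smul_apply, ContinuousLinearMap.sum_apply]
    have h2 : ∑ s ∈ T, E s (eps j)
        = ∑ s ∈ T, ((χ ((j : ℕ) • s) : ℂˣ) : ℂ) • eps j :=
      Finset.sum_congr rfl fun s _ => hE s j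
    rw [h2, ← Finset.sum_smul, smul_smul]
    congr 2
    rw [hTdef, Finset.sum_image (fun a ha b hb hab => solset_injOn n q ha hb hab)]
    rw [Finset.mul_sum]
    refine Finset.sum_congr rfl fun i _ => ?_
    rw [smul_add, AddChar.map_add_eq_mul, Units.val_mul, hz_pow]
  rw [ContinuousLinearMap.comp_apply, ContinuousLinearMap.comp_apply, hRHS]
  by_cases hj : ∃ m : ℕ+, j = n * m
  · obtain ⟨m, rfl⟩ := hj
    rw [adjoint_mu_eps_mul hμ, hE, map_smul, hμ]
    have hz1 : z = 1 := by
      rw [hzdef]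
      have : ((n * m : ℕ+) : ℕ) • t1 = 0 := by
        rw [PNat.mul_coe, mul_comm, mul_smul, hnt1, smul_zero]
      rw [this, AddChar.map_zero_eq_one, Units.val_one]
    have hsum1 : ∑ i ∈ Finset.range (n : ℕ), z ^ i = (n : ℂ) := by
      rw [hz1]
      simp
    have hchi : ((n * m : ℕ+) : ℕ) • s₀ = (m : ℕ) • qz q := by
      rw [PNat.mul_coe, mul_comm, mul_smul, hns0]
    rw [hsum1, hchi]
    congr 1
    field_simp
  · rw [adjoint_mu_eps_not_mul hμ n j hj, map_zero, map_zero]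
    have hzne : z ≠ 1 := by
      intro hz1
      have hu : χ ((j : ℕ) • t1) = 1 := Units.ext (by rw [← hzdef, hz1]; rfl)
      have h0 : χ ((j : ℕ) • t1) = χ 0 := by rw [hu, AddChar.map_zero_eq_one]
      have h1 : (j : ℕ) • t1 = 0 := hinj h0
      rw [ht1, qz_nsmul, mul_one_div] at h1
      have h2 : qz ((j : ℕ) / (n : ℕ) : ℚ) = qz ((0 : ℤ) : ℚ) := by
        rw [h1]; norm_num
      rw [qz_eq_iff] at h2
      obtain ⟨w, hw⟩ := h2
      have h3 : ((j : ℕ) : ℚ) = ((n : ℕ) : ℚ) * w := by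
        field_simp at hw
        push_cast at hw
        linarith [hw]
      have h4 : ((j : ℕ) : ℤ) = ((n : ℕ) : ℤ) * w := by exact_mod_cast h3
      have hn0 : (0 : ℤ) < ((n : ℕ) : ℤ) := by exact_mod_cast n.pos
      have hj0 : (0 : ℤ) < ((j : ℕ) : ℤ) := by exact_mod_cast j.pos
      have hw1 : 0 < w := by
        by_contra hc
        push_neg at hc
        have : ((n : ℕ) : ℤ) * w ≤ 0 := mul_nonpos_of_nonneg_of_nonpos hn0.le hc
        linarith
      have h5 : ((j : ℕ) : ℤ) = ((n : ℕ) : ℤ) * ((w.toNat : ℕ) : ℤ) := by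
        rw [Int.toNat_of_nonneg hw1.le]; exact h4
      have h6 : (j : ℕ) = (n : ℕ) * w.toNat := by exact_mod_cast h5
      refine hj ⟨⟨w.toNat, by omega⟩, ?_⟩
      apply PNat.coe_injective
      exact h6
    have hsum0 : ∑ i ∈ Finset.range (n : ℕ), z ^ i = 0 := by
      rw [geom_sum_eq hzne, hzn, sub_self, zero_div]
    rw [hsum0, mul_zero, mul_zero, zero_smul]
end

section
/- For each positive integer n, let αₙ be the ℂ-linear endomorphism of the group algebra ℂ[ℚ/ℤ] determined on the canonical basis (δ_r)_{r ∈ ℚ/ℤ} by αₙ(δ_r) = (1/n) ∑_{s ∈ ℚ/ℤ, n·s = r} δ_s (a finite sum of n terms). Then αₙ is multiplicative: αₙ(x y) = αₙ(x) αₙ(y) for all x, y ∈ ℂ[ℚ/ℤ]. -/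
namespace AlphaAux

noncomputable def e (n : ℕ+) : ZMod n →+ QModZ :=
  ZMod.lift n ⟨(QuotientAddGroup.mk' _).comp (zmultiplesHom ℚ ((n:ℚ)⁻¹)), by
    have : ((n:ℤ) • ((n:ℚ)⁻¹)) = 1 := by
      rw [zsmul_eq_mul]
      push_cast
      field_simp
    simp only [AddMonoidHom.comp_apply, zmultiplesHom_apply, this]
    rw [QuotientAddGroup.mk'_apply, QuotientAddGroup.eq_zero_iff]
    exact AddSubgroup.mem_zmultiples 1⟩

lemma e_int (n : ℕ+) (j : ℤ) :
    e n (j : ZMod n) = QuotientAddGroup.mk (j • ((n:ℚ)⁻¹)) := by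
  rw [e, ZMod.lift_coe]; rfl

lemma e_eq_zero (n : ℕ+) {k : ZMod n} (h : e n k = 0) : k = 0 := by
  obtain ⟨j, rfl⟩ := ZMod.intCast_surjective k
  rw [e_int, QuotientAddGroup.eq_zero_iff] at h
  obtain ⟨m, hm⟩ := h
  have hn : ((n:ℚ)) ≠ 0 := by exact_mod_cast n.ne_zero
  have : (j : ℚ) = m * n := by
    have := hm
    simp only [zsmul_eq_mul, smul_eq_mul, mul_one] at this
    field_simp at this
    linarith [this]
  have hj : j = m * n := by exact_mod_cast this
  rw [hj]
  push_cast
  simp [ZMod.natCast_self]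

lemma e_injective (n : ℕ+) : Function.Injective (e n) := by
  intro a b h
  have : e n (a - b) = 0 := by rw [map_sub, h, sub_self]
  have h0 := e_eq_zero n this
  rwa [sub_eq_zero] at h0

lemma nsmul_e (n : ℕ+) (k : ZMod n) : (n : ℕ) • e n k = 0 := by
  rw [← map_nsmul]
  have : (n : ℕ) • k = 0 := by
    rw [nsmul_eq_mul, ZMod.natCast_self, zero_mul]
  rw [this, map_zero]

lemma mem_ker (n : ℕ+) {t : QModZ} (h : (n:ℕ) • t = 0) : ∃ k, e n k = t := by
  obtain ⟨q, rfl⟩ := QuotientAddGroup.mk_surjective t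
  have : ((n:ℕ) • q : ℚ) ∈ AddSubgroup.zmultiples (1:ℚ) := by
    rwa [← QuotientAddGroup.eq_zero_iff, QuotientAddGroup.mk_nsmul]
  obtain ⟨j, hj⟩ := this
  refine ⟨(j : ZMod n), ?_⟩
  rw [e_int]
  congr 1
  have hn : ((n:ℚ)) ≠ 0 := by exact_mod_cast n.ne_zero
  simp only [zsmul_eq_mul, smul_eq_mul, mul_one] at hj ⊢
  have : (n:ℚ) * q = j := by
    have := hj.symm
    simp only [zsmul_eq_mul, smul_eq_mul, mul_one, nsmul_eq_mul] at this
    exact_mod_cast this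
  field_simp
  linarith

lemma fiber_eq (n : ℕ+) (s₀ : QModZ) :
    {s : QModZ | (n:ℕ) • s = (n:ℕ) • s₀} = Set.range (fun k : ZMod n => s₀ + e n k) := by
  ext s
  constructor
  · intro hs
    have : (n:ℕ) • (s - s₀) = 0 := by
      rw [smul_sub, hs, sub_self]
    obtain ⟨k, hk⟩ := mem_ker n this
    exact ⟨k, by show s₀ + e n k = s; rw [hk]; abel⟩
  · rintro ⟨k, rfl⟩
    show (n:ℕ) • (s₀ + e n k) = (n:ℕ) • s₀
    rw [smul_add, nsmul_e, add_zero]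

end AlphaAux

open AlphaAux

lemma alpha_single (n : ℕ+)
    (α : AddMonoidAlgebra ℂ QModZ →ₗ[ℂ] AddMonoidAlgebra ℂ QModZ)
    (hα : ∀ r : QModZ,
      α (AddMonoidAlgebra.single r 1) =
        (1 / (n : ℂ)) • ∑ᶠ (s : QModZ) (_ : (n : ℕ) • s = r),
          AddMonoidAlgebra.single s (1 : ℂ)) (s₀ : QModZ) :
    α (AddMonoidAlgebra.single ((n:ℕ) • s₀) (1:ℂ)) =
      (1/(n:ℂ)) • ∑ k : ZMod n, AddMonoidAlgebra.single (s₀ + e n k) (1:ℂ) := by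
  rw [hα]
  congr 1
  have hinj : Function.Injective (fun k : ZMod n => s₀ + e n k) :=
    fun a b hab => e_injective n (by simpa using hab)
  have h1 : (∑ᶠ (s : QModZ) (_ : (n:ℕ) • s = (n:ℕ) • s₀), AddMonoidAlgebra.single s (1:ℂ))
      = ∑ᶠ s ∈ Set.range (fun k : ZMod n => s₀ + e n k), AddMonoidAlgebra.single s (1:ℂ) := by
    rw [← fiber_eq]
    rfl
  rw [h1, finsum_mem_range hinj, finsum_eq_sum_of_fintype]

/-- For each positive integer `n`, the `ℂ`-linear endomorphism `αₙ` of the group algebra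
`ℂ[ℚ/ℤ]` determined on the canonical basis by `αₙ(δ_r) = (1/n) ∑_{n·s = r} δ_s` is
multiplicative: `αₙ(x y) = αₙ(x) αₙ(y)`. -/
theorem alpha_multiplicative (n : ℕ+)
    (α : AddMonoidAlgebra ℂ QModZ →ₗ[ℂ] AddMonoidAlgebra ℂ QModZ)
    (hα : ∀ r : QModZ,
      α (AddMonoidAlgebra.single r 1) =
        (1 / (n : ℂ)) • ∑ᶠ (s : QModZ) (_ : (n : ℕ) • s = r),
          AddMonoidAlgebra.single s (1 : ℂ)) :
    ∀ x y : AddMonoidAlgebra ℂ QModZ, α (x * y) = α x * α y := by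
  classical
  have hn : ((n:ℂ)) ≠ 0 := by exact_mod_cast n.ne_zero
  have hdiv : ∀ r : QModZ, ∃ s₀ : QModZ, (n:ℕ) • s₀ = r := by
    intro r
    obtain ⟨q, rfl⟩ := QuotientAddGroup.mk_surjective r
    refine ⟨QuotientAddGroup.mk (((n:ℚ))⁻¹ * q), ?_⟩
    rw [← QuotientAddGroup.mk_nsmul]
    congr 1
    have hq : ((n:ℚ)) ≠ 0 := by exact_mod_cast n.ne_zero
    rw [nsmul_eq_mul]
    field_simp
  have hkey : ∀ r r' : QModZ,
      α (AddMonoidAlgebra.single r 1 * AddMonoidAlgebra.single r' 1) =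
        α (AddMonoidAlgebra.single r 1) * α (AddMonoidAlgebra.single r' 1) := by
    intro r r'
    obtain ⟨s₀, rfl⟩ := hdiv r
    obtain ⟨s₀', rfl⟩ := hdiv r'
    rw [AddMonoidAlgebra.single_mul_single, one_mul]
    have hsum : ((n:ℕ) • s₀ + (n:ℕ) • s₀') = (n:ℕ) • (s₀ + s₀') := (smul_add _ _ _).symm
    rw [hsum, alpha_single n α hα, alpha_single n α hα, alpha_single n α hα]
    rw [smul_mul_assoc, mul_smul_comm, Finset.sum_mul_sum]
    have hinner : ∀ k : ZMod n,
        (∑ k' : ZMod n, AddMonoidAlgebra.single (s₀ + e n k) (1:ℂ) *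
          AddMonoidAlgebra.single (s₀' + e n k') (1:ℂ)) =
        ∑ j : ZMod n, AddMonoidAlgebra.single ((s₀ + s₀') + e n j) (1:ℂ) := by
      intro k
      refine Fintype.sum_equiv (Equiv.addLeft k) _ _ (fun k' => ?_)
      rw [AddMonoidAlgebra.single_mul_single, one_mul]
      congr 1
      show s₀ + e n k + (s₀' + e n k') = s₀ + s₀' + e n (k + k')
      rw [map_add]
      abel
    simp_rw [hinner]
    rw [Finset.sum_const, Finset.card_univ, ZMod.card, smul_smul,
      ← Nat.cast_smul_eq_nsmul ℂ, smul_smul]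
    congr 1
    field_simp
  have hsingle : ∀ (r r' : QModZ) (c c' : ℂ),
      α (AddMonoidAlgebra.single r c * AddMonoidAlgebra.single r' c') =
        α (AddMonoidAlgebra.single r c) * α (AddMonoidAlgebra.single r' c') := by
    intro r r' c c'
    have h1 : AddMonoidAlgebra.single r c = c • AddMonoidAlgebra.single r (1:ℂ) := by
      rw [AddMonoidAlgebra.smul_single', mul_one]
    have h2 : AddMonoidAlgebra.single r' c' = c' • AddMonoidAlgebra.single r' (1:ℂ) := by
      rw [AddMonoidAlgebra.smul_single', mul_one]
    rw [h1, h2, smul_mul_assoc, mul_smul_comm, map_smul, map_smul, hkey,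
      map_smul, map_smul, ← mul_smul_comm, ← smul_mul_assoc]
  intro x y
  induction x using AddMonoidAlgebra.induction_linear with
  | zero => simp
  | add f g hf hg => simp [add_mul, map_add, hf, hg]
  | single a b =>
    induction y using AddMonoidAlgebra.induction_linear with
    | zero => simp
    | add f g hf hg => simp [mul_add, map_add, hf, hg]
    | single a' b' => exact hsingle a a' b b'
end

section
/- For positive integers n and m, the linear maps αₙ on ℂ[ℚ/ℤ] determined by αₙ(δ_r) = (1/n) ∑_{s ∈ ℚ/ℤ, n·s = r} δ_s satisfy the semigroup law αₙ ∘ α_m = α_{nm}. -/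
lemma fiber_finite (n : ℕ) (hn : 0 < n) (r : QModZ) :
    {s : QModZ | n • s = r}.Finite := by
  haveI : NeZero n := ⟨hn.ne'⟩
  obtain ⟨q, rfl⟩ := QuotientAddGroup.mk_surjective r
  apply Set.Finite.subset (Set.finite_range
    (fun k : ZMod n => (QuotientAddGroup.mk (q / n + ((k.val : ℤ) : ℚ) / n) : QModZ)))
  rintro s hs
  obtain ⟨p, rfl⟩ := QuotientAddGroup.mk_surjective s
  simp only [Set.mem_setOf_eq] at hs
  rw [← QuotientAddGroup.mk_nsmul, QuotientAddGroup.eq] at hs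
  obtain ⟨j, hj⟩ := hs
  simp only [zsmul_eq_mul, mul_one] at hj
  -- hj : (j : ℚ) = -(n • p) + q
  refine ⟨((-j : ℤ) : ZMod n), ?_⟩
  rw [QuotientAddGroup.eq]
  refine ⟨(-j) / n, ?_⟩
  simp only [zsmul_eq_mul, mul_one]
  have hv : (((-j : ℤ) : ZMod n).val : ℤ) = (-j) % n := ZMod.val_intCast _
  have hne : (n : ℚ) ≠ 0 := Nat.cast_ne_zero.mpr hn.ne'
  have hmod : (n : ℤ) * ((-j) / n) + (-j) % n = -j := Int.mul_ediv_add_emod _ _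
  have hp : (n : ℚ) * p = q - j := by
    rw [nsmul_eq_mul] at hj
    linarith
  rw [hv]
  have : (((-j) % n : ℤ) : ℚ) = -j - n * ((-j)/n : ℤ) := by
    have := congrArg (fun z : ℤ => (z : ℚ)) hmod
    push_cast at this
    linarith
  field_simp
  push_cast [this]
  ring_nf
  rw [hp]
  push_cast
  ring

/-- For positive integers `n` and `m`, the `ℂ`-linear maps `αₙ` on the group algebra
`ℂ[ℚ/ℤ]` determined by `αₙ(δ_r) = (1/n) ∑_{n·s = r} δ_s` satisfy the semigroup law
`αₙ ∘ α_m = α_{nm}`. -/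
theorem alpha_semigroup_law
    (α : ℕ+ → (AddMonoidAlgebra ℂ QModZ →ₗ[ℂ] AddMonoidAlgebra ℂ QModZ))
    (hα : ∀ (n : ℕ+) (r : QModZ),
      α n (AddMonoidAlgebra.single r 1) =
        (1 / (n : ℂ)) • ∑ᶠ (s : QModZ) (_ : (n : ℕ) • s = r),
          AddMonoidAlgebra.single s (1 : ℂ))
    (n m : ℕ+) :
    α n ∘ₗ α m = α (n * m) := by
  classical
  -- finset version of the fibers
  set T : ℕ+ → QModZ → Finset QModZ :=
    fun k r => (fiber_finite k k.pos r).toFinset with hT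
  have hmem : ∀ (k : ℕ+) (r t : QModZ), t ∈ T k r ↔ (k : ℕ) • t = r := by
    intro k r t
    simp [hT, Set.Finite.mem_toFinset]
  have hα' : ∀ (k : ℕ+) (r : QModZ),
      α k (AddMonoidAlgebra.single r 1) =
        (1 / (k : ℂ)) • ∑ t ∈ T k r, AddMonoidAlgebra.single t (1 : ℂ) := by
    intro k r
    rw [hα k r]
    congr 1
    have : ∑ᶠ (s : QModZ) (_ : (k : ℕ) • s = r), AddMonoidAlgebra.single s (1 : ℂ)
        = ∑ᶠ s ∈ ((T k r : Set QModZ)), AddMonoidAlgebra.single s (1 : ℂ) := by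
      apply finsum_congr
      intro s
      rw [finsum_eq_if, finsum_eq_if, if_congr (Iff.symm ((Finset.mem_coe).trans (hmem k r s))) rfl rfl]
    rw [this, finsum_mem_coe_finset]
  apply AddMonoidAlgebra.lhom_ext'
  intro r
  apply LinearMap.ext
  intro b
  simp only [LinearMap.comp_apply, AddMonoidAlgebra.lsingle_apply]
  have hb : (AddMonoidAlgebra.single r b : AddMonoidAlgebra ℂ QModZ)
      = b • AddMonoidAlgebra.single r 1 := by
    rw [AddMonoidAlgebra.smul_single', mul_one]
  rw [hb, map_smul, map_smul, map_smul]
  congr 1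
  rw [hα' m r, map_smul, map_sum, hα' (n*m) r]
  simp_rw [hα' n]
  have hdisj : ∀ s₁ ∈ T m r, ∀ s₂ ∈ T m r, s₁ ≠ s₂ → Disjoint (T n s₁) (T n s₂) := by
    intro s₁ _ s₂ _ hne
    rw [Finset.disjoint_left]
    intro t h1 h2
    rw [hmem] at h1 h2
    exact hne (h1 ▸ h2)
  have hbiU : (T m r).biUnion (T n) = T (n * m) r := by
    ext t
    simp only [Finset.mem_biUnion, hmem]
    constructor
    · rintro ⟨s, hs, rfl⟩
      rw [← hs, ← mul_smul]
      congr 1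
      simp [mul_comm]
    · intro h
      refine ⟨(n : ℕ) • t, ?_, rfl⟩
      rw [← mul_smul, ← h]
      congr 1
      simp [mul_comm]
  rw [← hbiU, Finset.sum_biUnion hdisj, Finset.smul_sum, Finset.smul_sum]
  apply Finset.sum_congr rfl
  intro s _
  rw [smul_smul]
  congr 1
  have hn : ((n : ℕ) : ℂ) ≠ 0 := Nat.cast_ne_zero.mpr n.pos.ne'
  have hm : ((m : ℕ) : ℂ) ≠ 0 := Nat.cast_ne_zero.mpr m.pos.ne'
  rw [show ((n * m : ℕ+) : ℕ) = (n : ℕ) * (m : ℕ) from rfl]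
  push_cast
  field_simp
end

section
/- Let K be a number field and 𝔸_K its ring of adèles. Then the image of the diagonal embedding of the multiplicative group K^× into the idèle group GL₁(𝔸_K) = (𝔸_K)^× is a discrete subgroup of (𝔸_K)^×. -/
open NumberField

section Auxiliary

open IsDedekindDomain
open scoped nonZeroDivisors

/-- In a Dedekind domain, if `v(a) ≤ v(b)` for every height-one prime `v`, then `b ∣ a`. -/
theorem dvd_of_intValuation_le' {R : Type*} [CommRing R] [IsDedekindDomain R]
    {a b : R} (hb : b ≠ 0)
    (h : ∀ v : HeightOneSpectrum R, v.intValuationDef a ≤ v.intValuationDef b) : b ∣ a := by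
  classical
  rcases eq_or_ne a 0 with rfl | ha
  · exact dvd_zero b
  rw [← Ideal.span_singleton_le_span_singleton]
  apply Ideal.le_of_dvd
  rw [← Associates.mk_le_mk_iff_dvd]
  have ha' : Associates.mk (Ideal.span {a} : Ideal R) ≠ 0 := by
    rw [Associates.mk_ne_zero, Ne, Ideal.zero_eq_bot, Ideal.span_singleton_eq_bot]
    exact ha
  have hb' : Associates.mk (Ideal.span {b} : Ideal R) ≠ 0 := by
    rw [Associates.mk_ne_zero, Ne, Ideal.zero_eq_bot, Ideal.span_singleton_eq_bot]
    exact hb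
  rw [← Associates.factors_le]
  obtain ⟨sa, hsa⟩ := Associates.factors_eq_some_iff_ne_zero.mpr ha'
  obtain ⟨sb, hsb⟩ := Associates.factors_eq_some_iff_ne_zero.mpr hb'
  rw [hsa, hsb, WithTop.coe_le_coe]
  rw [Multiset.le_iff_count]
  rintro ⟨p, hp⟩
  obtain ⟨I, rfl⟩ := Associates.mk_surjective p
  have hI : Irreducible I := Associates.irreducible_mk.mp hp
  have hIp : Prime I := UniqueFactorizationMonoid.irreducible_iff_prime.mp hI
  let v : HeightOneSpectrum R := ⟨I, Ideal.isPrime_of_prime hIp, hIp.ne_zero⟩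
  have hv := h v
  rw [v.intValuationDef_if_neg ha, v.intValuationDef_if_neg hb, WithZero.exp_le_exp,
    neg_le_neg_iff, Int.ofNat_le] at hv
  have hva : (Associates.mk v.asIdeal).count (Associates.mk (Ideal.span {a} : Ideal R)).factors
      = Multiset.count ⟨Associates.mk I, hp⟩ sa := by
    rw [hsa]
    exact Associates.count_some hp sa
  have hvb : (Associates.mk v.asIdeal).count (Associates.mk (Ideal.span {b} : Ideal R)).factors
      = Multiset.count ⟨Associates.mk I, hp⟩ sb := by
    rw [hsb]
    exact Associates.count_some hp sb
  rw [hva, hvb] at hv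
  exact hv

/-- An element of the fraction field of a Dedekind domain all of whose valuations are at
most one lies in the image of the Dedekind domain. -/
theorem mem_range_of_valuation_le' {R K : Type*} [CommRing R] [IsDedekindDomain R] [Field K]
    [Algebra R K] [IsFractionRing R K] {x : K}
    (h : ∀ v : HeightOneSpectrum R, v.valuation K x ≤ 1) :
    ∃ r : R, algebraMap R K r = x := by
  obtain ⟨a, b, hb, rfl⟩ := IsFractionRing.div_surjective (A := R) x
  have hb0 : b ≠ 0 := nonZeroDivisors.ne_zero hb
  have hbK : algebraMap R K b ≠ 0 :=
    IsFractionRing.to_map_ne_zero_of_mem_nonZeroDivisors hb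
  have key : ∀ v : HeightOneSpectrum R, v.intValuationDef a ≤ v.intValuationDef b := by
    intro v
    have hxa : algebraMap R K a = (algebraMap R K a / algebraMap R K b) * algebraMap R K b := by
      field_simp
    have : v.valuation K (algebraMap R K a) ≤ v.valuation K (algebraMap R K b) := by
      rw [hxa, Valuation.map_mul]
      calc v.valuation K (algebraMap R K a / algebraMap R K b) * v.valuation K (algebraMap R K b)
          ≤ 1 * v.valuation K (algebraMap R K b) := mul_le_mul_left (h v) _
        _ = v.valuation K (algebraMap R K b) := one_mul _
    rwa [v.valuation_of_algebraMap, v.valuation_of_algebraMap, HeightOneSpectrum.intValuation_apply,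
      HeightOneSpectrum.intValuation_apply] at this
  obtain ⟨c, rfl⟩ := dvd_of_intValuation_le' hb0 key
  refine ⟨c, ?_⟩
  rw [map_mul]
  field_simp

/-- A nonzero algebraic integer has some archimedean absolute value at least one. -/
theorem eq_zero_of_infinitePlace_lt_one' {K : Type*} [Field K] [NumberField K] (r : 𝓞 K)
    (h : ∀ w : InfinitePlace K, w (algebraMap (𝓞 K) K r) < 1) : r = 0 := by
  by_contra hr
  have hrK : (algebraMap (𝓞 K) K r) ≠ 0 := by
    simpa using hr
  have h1 : (1 : ℝ) ≤ |Algebra.norm ℚ (algebraMap (𝓞 K) K r)| := by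
    rw [← Algebra.coe_norm_int r]
    have hn : Algebra.norm ℤ r ≠ 0 := by
      rwa [Algebra.norm_ne_zero_iff]
    have := Int.one_le_abs hn
    push_cast
    exact_mod_cast this
  have h2 := InfinitePlace.prod_eq_abs_norm (algebraMap (𝓞 K) K r)
  have h3 : ∏ w : InfinitePlace K, w (algebraMap (𝓞 K) K r) ^ w.mult < 1 := by
    rw [← Finset.prod_const_one (s := (Finset.univ : Finset (InfinitePlace K)))]
    refine Finset.prod_lt_prod_of_nonempty ?_ ?_ Finset.univ_nonempty
    · intro w _
      exact pow_pos (InfinitePlace.pos_iff.mpr hrK) _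
    · intro w _
      exact pow_lt_one₀ (apply_nonneg w _) (h w) InfinitePlace.mult_ne_zero
  rw [h2] at h3
  exact absurd h1 (not_le.mpr h3)

/-- There is a neighbourhood of `0` in the adele ring of a number field meeting the
diagonally embedded copy of `K` only in `0`. -/
theorem exists_nhds_zero_adele (K : Type*) [Field K] [NumberField K] :
    ∃ U ∈ nhds (0 : AdeleRing (𝓞 K) K), ∀ x : K, algebraMap K (AdeleRing (𝓞 K) K) x ∈ U → x = 0 := by
  classical
  -- the finite part: the basic neighbourhood of integral finite adeles
  have hUf : {f : FiniteAdeleRing (𝓞 K) K | ∀ v, f v ∈ v.adicCompletionIntegers K} ∈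
      nhds (0 : FiniteAdeleRing (𝓞 K) K) :=
    (RestrictedProduct.isOpen_forall_mem (fun v : HeightOneSpectrum (𝓞 K) =>
      Valued.isOpen_valuationSubring _)).mem_nhds (fun v => zero_mem _)
  -- the infinite part: the open unit polydisc
  let Ui : Set (InfiniteAdeleRing K) := Set.univ.pi (fun v => Metric.ball 0 1)
  have hUi : Ui ∈ nhds (0 : InfiniteAdeleRing K) := by
    apply set_pi_mem_nhds Set.finite_univ
    intro v _
    exact Metric.ball_mem_nhds _ one_pos
  refine ⟨Ui ×ˢ _, prod_mem_nhds hUi hUf, ?_⟩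
  intro x hx
  obtain ⟨hx1, hx2⟩ := hx
  -- finite part: all nonarchimedean valuations of `x` are at most one
  have hval : ∀ v : HeightOneSpectrum (𝓞 K), v.valuation K x ≤ 1 := by
    intro v
    have hmem := hx2 v
    rw [AdeleRing.algebraMap_snd_apply] at hmem
    letI : Valued K (WithZero (Multiplicative ℤ)) := v.adicValued
    rwa [HeightOneSpectrum.mem_adicCompletionIntegers,
      HeightOneSpectrum.valuedAdicCompletion_eq_valuation'] at hmem
  obtain ⟨r, rfl⟩ := mem_range_of_valuation_le' hval
  -- infinite part: all archimedean absolute values of `x` are less than one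
  have hinf : ∀ w : InfinitePlace K, w (algebraMap (𝓞 K) K r) < 1 := by
    intro w
    have := hx1 w (Set.mem_univ w)
    rw [AdeleRing.algebraMap_fst_apply, Metric.mem_ball, dist_zero_right] at this
    exact (InfinitePlace.Completion.norm_coe w _).symm.trans_lt this
  rw [eq_zero_of_infinitePlace_lt_one' r hinf, map_zero]

end Auxiliary

/-- Let `K` be a number field and `𝔸_K` its adèle ring.  The image of the diagonal
embedding of `K^×` into the idèle group `GL₁(𝔸_K) = (𝔸_K)^×` is a discrete subgroup of
`(𝔸_K)^×`. -/
theorem ideleClassGroup_principal_ideles_discrete (K : Type*) [Field K] [NumberField K] :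
    DiscreteTopology
      (Units.map (algebraMap K (AdeleRing (𝓞 K) K) : K →* AdeleRing (𝓞 K) K)).range := by
  obtain ⟨U, hU, hU0⟩ := exists_nhds_zero_adele K
  set S := (Units.map (algebraMap K (AdeleRing (𝓞 K) K) : K →* AdeleRing (𝓞 K) K)).range with hS
  have key : {(1 : S)} ∈ nhds (1 : S) := by
    rw [nhds_subtype]
    rw [Filter.mem_comap]
    refine ⟨(fun u : (AdeleRing (𝓞 K) K)ˣ => (u : AdeleRing (𝓞 K) K) - 1) ⁻¹' U, ?_, ?_⟩
    · apply ContinuousAt.preimage_mem_nhds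
      · exact (Units.continuous_val.sub continuous_const).continuousAt
      · simpa using hU
    · rintro ⟨u, hu⟩ h
      obtain ⟨k, rfl⟩ := hu
      have hk : (k : K) - 1 = 0 := by
        apply hU0
        rw [map_sub, map_one]
        simpa [Units.coe_map] using h
      have hk1 : k = 1 := Units.ext (by rwa [sub_eq_zero] at hk)
      simp only [Set.mem_singleton_iff]
      ext
      simp [hk1]
  have hopen : IsOpen ({1} : Set S) := by
    obtain ⟨V, hVsub, hVo, hV1⟩ := mem_nhds_iff.mp key
    have : V = {1} := Set.Subset.antisymm hVsub (Set.singleton_subset_iff.mpr hV1)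
    rw [← this]
    exact hVo
  exact discreteTopology_of_isOpen_singleton_one hopen
end
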